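/- Predecessors of a run of 01-blocks: let x' : ZMod L → {0,1} be a configuration, b a bit field, x := U(x',b), and m ≥ 1. Suppose (x_{j+2k}, x_{j+2k+1}) = (0,1) for all k = 0,…,m−1. Then (x'_{j+2k}, x'_{j+2k+1}) = (1,0) for all k = 0,…,m−2, and (x'_{j+2m−2}, x'_{j+2m−1}) ∈ {(1,0),(0,1)}; moreover, in the case (x'_{j+2m−2}, x'_{j+2m−1}) = (0,1), necessarily x'_{j+2m} = 1 and x_{j+2m} = 1 (so the final 01-block can persist only when it is followed by a 1). -/
import Mathlib


/-- The flux function `q(w,x,y,z;b)`. -/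
def flux (w x y z b : ℤ) : ℤ :=
  if w = 1 ∧ x = 1 ∧ y = 1 ∧ z = 0 then b
  else if (w = 0 ∨ w = 1) ∧ x = 0 ∧ y = 1 ∧ z = 0 then 1
  else 0

/-- The stochastic 5-neighbor update `U(v,b)`. -/
def upd (L : ℕ) (v b : ZMod L → ℤ) : ZMod L → ℤ := fun j =>
  v j + flux (v (j - 3)) (v (j - 2)) (v (j - 1)) (v j) (b j)
      - flux (v (j - 2)) (v (j - 1)) (v j) (v (j + 1)) (b (j + 1))

/-- A map `ZMod L → ℤ` is a configuration (resp. bit field) if all its values are 0 or 1. -/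
def IsBin (L : ℕ) (x : ZMod L → ℤ) : Prop := ∀ j, x j = 0 ∨ x j = 1

/-- The number of occurrences of the pattern `w` in the configuration `x`. -/
def patCount (L : ℕ) (x : ZMod L → ℤ) (w : List ℤ) : ℕ :=
  ((Finset.range L).filter fun j =>
    ∀ i < w.length, x ((j + i : ℕ) : ZMod L) = w.getD i 0).card

/-- The inflow flux at site `j`. -/
def cf {L : ℕ} (x' b : ZMod L → ℤ) (j : ZMod L) : ℤ :=
  flux (x' (j - 3)) (x' (j - 2)) (x' (j - 1)) (x' j) (b j)

lemma cf_bin {L : ℕ} (x' b : ZMod L → ℤ) (hb : IsBin L b) (j : ZMod L) :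
    cf x' b j = 0 ∨ cf x' b j = 1 := by
  unfold cf flux
  split_ifs
  · exact hb j
  · right; rfl
  · left; rfl

lemma cf_one {L : ℕ} (x' b : ZMod L → ℤ) (j : ZMod L) (h : cf x' b j = 1) :
    x' (j - 1) = 1 ∧ x' j = 0 ∧ (x' (j - 2) = 0 ∨ x' (j - 3) = 1) := by
  unfold cf flux at h
  split_ifs at h with h1 h2
  · exact ⟨h1.2.2.1, h1.2.2.2, Or.inr h1.1⟩
  · exact ⟨h2.2.2.1, h2.2.2.2, Or.inl h2.2.1⟩
  · exact absurd h (by norm_num)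

lemma cf_one_of {L : ℕ} (x' b : ZMod L → ℤ) (hx' : IsBin L x') (j : ZMod L)
    (h2 : x' (j - 2) = 0) (h1 : x' (j - 1) = 1) (h0 : x' j = 0) : cf x' b j = 1 := by
  unfold cf flux
  split_ifs with ha hbb
  · exfalso; rw [h2] at ha; exact absurd ha.2.1 (by norm_num)
  · rfl
  · exact absurd ⟨hx' (j - 3), h2, h1, h0⟩ hbb

lemma upd_eq {L : ℕ} (x' b : ZMod L → ℤ) (j : ZMod L) :
    upd L x' b j = x' j + cf x' b j - cf x' b (j + 1) := by
  unfold upd cf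
  rw [show j + 1 - 3 = j - 2 by ring, show j + 1 - 2 = j - 1 by ring,
    show j + 1 - 1 = j by ring]

/-- The structure of a preimage of a single `01` block. -/
lemma block01 {L : ℕ} (x' b : ZMod L → ℤ) (hx' : IsBin L x') (hb : IsBin L b)
    (p : ZMod L) (h0 : upd L x' b p = 0) (h1 : upd L x' b (p + 1) = 1) :
    (x' p = 1 ∧ x' (p + 1) = 0 ∧ cf x' b (p + 1) = 1 ∧ cf x' b (p + 2) = 0) ∨
    (x' p = 0 ∧ x' (p + 1) = 1 ∧ cf x' b (p + 1) = 0 ∧ cf x' b (p + 2) = 0) := by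
  rw [upd_eq] at h0 h1
  rw [show p + 1 + 1 = p + 2 by ring] at h1
  have b0 := hx' p
  have b1 := hx' (p + 1)
  have c0 := cf_bin x' b hb p
  rcases cf_bin x' b hb (p + 1) with hc1 | hc1
  · rcases cf_bin x' b hb (p + 2) with hc2 | hc2
    · omega
    · obtain ⟨u, v⟩ := cf_one x' b (p + 2) hc2
      rw [show p + 2 - 1 = p + 1 by ring] at u
      omega
  · obtain ⟨u, v, -⟩ := cf_one x' b (p + 1) hc1
    rw [show p + 1 - 1 = p by ring] at u
    rcases cf_bin x' b hb (p + 2) with hc2 | hc2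
    · omega
    · obtain ⟨u2, -⟩ := cf_one x' b (p + 2) hc2
      rw [show p + 2 - 1 = p + 1 by ring] at u2
      omega

/-- After a surviving `01` block, the predecessor must have a `1`. -/
lemma afterA {L : ℕ} (x' b : ZMod L → ℤ) (hx' : IsBin L x') (hb : IsBin L b)
    (p : ZMod L) (hA0 : x' p = 0) (hA1 : x' (p + 1) = 1) (hA2 : cf x' b (p + 2) = 0) :
    x' (p + 2) = 1 := by
  rcases hx' (p + 2) with h | h
  · exfalso
    have := cf_one_of x' b hx' (p + 2)
      (by rw [show p + 2 - 2 = p by ring]; exact hA0)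
      (by rw [show p + 2 - 1 = p + 1 by ring]; exact hA1) h
    omega
  · exact h

lemma cf3_zero {L : ℕ} (x' b : ZMod L → ℤ) (hb : IsBin L b)
    (p : ZMod L) (hA0 : x' p = 0) (hA1 : x' (p + 1) = 1) : cf x' b (p + 3) = 0 := by
  rcases cf_bin x' b hb (p + 3) with h | h
  · exact h
  · exfalso
    obtain ⟨-, -, h3⟩ := cf_one x' b (p + 3) h
    rw [show p + 3 - 2 = p + 1 by ring, show p + 3 - 3 = p by ring] at h3
    omega

/-- A surviving `01` block cannot be followed by another `01` block. -/
lemma noA_chain {L : ℕ} (x' b : ZMod L → ℤ) (hx' : IsBin L x') (hb : IsBin L b)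
    (p : ZMod L) (hA0 : x' p = 0) (hA1 : x' (p + 1) = 1) (hA2 : cf x' b (p + 2) = 0)
    (hn0 : upd L x' b (p + 2) = 0) (hn1 : upd L x' b (p + 3) = 1) : False := by
  have h2 : x' (p + 2) = 1 := afterA x' b hx' hb p hA0 hA1 hA2
  have hn1' : upd L x' b (p + 2 + 1) = 1 := by rw [show p + 2 + 1 = p + 3 by ring]; exact hn1
  rcases block01 x' b hx' hb (p + 2) hn0 hn1' with hB | hA
  · have := cf3_zero x' b hb p hA0 hA1
    rw [show p + 2 + 1 = p + 3 by ring] at hB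
    omega
  · omega

/-- In the surviving case, the next updated value is `1`. -/
lemma lastA_next {L : ℕ} (x' b : ZMod L → ℤ) (hx' : IsBin L x') (hb : IsBin L b)
    (p : ZMod L) (hA0 : x' p = 0) (hA1 : x' (p + 1) = 1) (hA2 : cf x' b (p + 2) = 0) :
    x' (p + 2) = 1 ∧ upd L x' b (p + 2) = 1 := by
  have h2 : x' (p + 2) = 1 := afterA x' b hx' hb p hA0 hA1 hA2
  have h3 : cf x' b (p + 3) = 0 := cf3_zero x' b hb p hA0 hA1
  refine ⟨h2, ?_⟩
  rw [upd_eq, show p + 2 + 1 = p + 3 by ring, h2, hA2, h3]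
  ring

/-- predecessors of a run of m consecutive 01-blocks; the final 01-block
can persist only when it is followed by a 1. -/
theorem predecessors_of_01_run (L : ℕ) (hL : 6 ≤ L) (x' b : ZMod L → ℤ)
    (hx' : IsBin L x') (hb : IsBin L b) (x : ZMod L → ℤ) (hx : x = upd L x' b)
    (j : ZMod L) (m : ℕ) (hm : 1 ≤ m)
    (h : ∀ k < m, x (j + ((2 * k : ℕ) : ZMod L)) = 0 ∧
      x (j + ((2 * k + 1 : ℕ) : ZMod L)) = 1) :
    (∀ k, k + 1 < m → x' (j + ((2 * k : ℕ) : ZMod L)) = 1 ∧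
      x' (j + ((2 * k + 1 : ℕ) : ZMod L)) = 0) ∧
    ((x' (j + ((2 * (m - 1) : ℕ) : ZMod L)) = 1 ∧
        x' (j + ((2 * (m - 1) + 1 : ℕ) : ZMod L)) = 0) ∨
      (x' (j + ((2 * (m - 1) : ℕ) : ZMod L)) = 0 ∧
        x' (j + ((2 * (m - 1) + 1 : ℕ) : ZMod L)) = 1)) ∧
    (x' (j + ((2 * (m - 1) : ℕ) : ZMod L)) = 0 ∧
        x' (j + ((2 * (m - 1) + 1 : ℕ) : ZMod L)) = 1 →
      x' (j + ((2 * m : ℕ) : ZMod L)) = 1 ∧ x (j + ((2 * m : ℕ) : ZMod L)) = 1) := by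
  subst hx
  -- index arithmetic
  have e1 : ∀ k : ℕ, j + ((2 * k + 1 : ℕ) : ZMod L) = j + ((2 * k : ℕ) : ZMod L) + 1 := by
    intro k; push_cast; ring
  have e2 : ∀ k : ℕ, j + ((2 * (k + 1) : ℕ) : ZMod L) = j + ((2 * k : ℕ) : ZMod L) + 2 := by
    intro k; push_cast; ring
  have e3 : ∀ k : ℕ, j + ((2 * (k + 1) + 1 : ℕ) : ZMod L) = j + ((2 * k : ℕ) : ZMod L) + 3 := by
    intro k; push_cast; ring
  set u := upd L x' b with hu
  -- the block structure at each k
  have hB : ∀ k < m,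
      (x' (j + ((2 * k : ℕ) : ZMod L)) = 1 ∧ x' (j + ((2 * k : ℕ) : ZMod L) + 1) = 0 ∧
        cf x' b (j + ((2 * k : ℕ) : ZMod L) + 1) = 1 ∧
        cf x' b (j + ((2 * k : ℕ) : ZMod L) + 2) = 0) ∨
      (x' (j + ((2 * k : ℕ) : ZMod L)) = 0 ∧ x' (j + ((2 * k : ℕ) : ZMod L) + 1) = 1 ∧
        cf x' b (j + ((2 * k : ℕ) : ZMod L) + 1) = 0 ∧
        cf x' b (j + ((2 * k : ℕ) : ZMod L) + 2) = 0) := by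
    intro k hk
    have hk0 := (h k hk).1
    have hk1 := (h k hk).2
    rw [e1 k] at hk1
    exact block01 x' b hx' hb _ hk0 hk1
  refine ⟨?_, ?_, ?_⟩
  · intro k hk
    rcases hB k (by omega) with hBk | hAk
    · exact ⟨hBk.1, by rw [e1 k]; exact hBk.2.1⟩
    · exfalso
      have hn0 := (h (k + 1) hk).1
      have hn1 := (h (k + 1) hk).2
      rw [e2 k] at hn0
      rw [e3 k] at hn1
      exact noA_chain x' b hx' hb _ hAk.1 hAk.2.1 hAk.2.2.2 hn0 hn1
  · rcases hB (m - 1) (by omega) with hBk | hAk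
    · exact Or.inl ⟨hBk.1, by rw [e1 (m - 1)]; exact hBk.2.1⟩
    · exact Or.inr ⟨hAk.1, by rw [e1 (m - 1)]; exact hAk.2.1⟩
  · rintro ⟨h0', h1'⟩
    rw [e1 (m - 1)] at h1'
    rcases hB (m - 1) (by omega) with hBk | hAk
    · omega
    · have := lastA_next x' b hx' hb _ hAk.1 hAk.2.1 hAk.2.2.2
      have em : j + ((2 * m : ℕ) : ZMod L) = j + ((2 * (m - 1) : ℕ) : ZMod L) + 2 := by
        rw [show 2 * m = 2 * (m - 1) + 2 by omega]; push_cast; ring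
      rw [em]
      exact this
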